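/- Let F₁ be the reflexive pattern on {r, g, b} whose only missing arc is (b, g). Let D be an F₁-arc-coloured multidigraph and let D̂ be the digraph obtained from D by: replacing any parallel pair containing an r-coloured arc from u to v by a single r-coloured arc; and replacing any parallel pair from u to v consisting of a g-arc and a b-arc by a single g-coloured arc (u,v) together with new vertices z₁, z₂ and arcs (u,z₁) coloured b, (z₁,z₂) coloured g, and (z₁,v) coloured b. Then for any two vertices x, y of D, there is an F₁-path from x to y in D if and only if there is an F₁-path from x to y in D̂. -/

import Mathlib

/-- The list of colours along a list of vertices, given an arc-colouring `c`. -/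
def colourList {α β : Type*} (c : β → β → α) : List β → List α
  | a :: b :: t => c a b :: colourList c (b :: t)
  | _ => []

/-- An `H`-walk in the `H`-arc-coloured digraph `(D, c)`: a directed walk with at least one
arc whose sequence of arc-colours is a directed walk in the pattern `H`. -/
def IsHWalk {α β : Type*} (H : α → α → Prop) (D : β → β → Prop) (c : β → β → α)
    (l : List β) : Prop :=
  2 ≤ l.length ∧ l.Chain' D ∧ (colourList c l).Chain' H

/-- An `H`-path: an `H`-walk whose vertices are pairwise distinct. -/
def IsHPath {α β : Type*} (H : α → α → Prop) (D : β → β → Prop) (c : β → β → α)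
    (l : List β) : Prop :=
  IsHWalk H D c l ∧ l.Nodup

/-- `u` reaches `v` by `H`-paths. -/
def HPathReach {α β : Type*} (H : α → α → Prop) (D : β → β → Prop) (c : β → β → α)
    (u v : β) : Prop :=
  ∃ l, IsHPath H D c l ∧ l.head? = some u ∧ l.getLast? = some v

/-- `u` reaches `v` by `H`-walks. -/
def HWalkReach {α β : Type*} (H : α → α → Prop) (D : β → β → Prop) (c : β → β → α)
    (u v : β) : Prop :=
  ∃ l, IsHWalk H D c l ∧ l.head? = some u ∧ l.getLast? = some v

/-- A digraph (binary relation) is loopless. -/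
def Loopless {β : Type*} (D : β → β → Prop) : Prop := ∀ v, ¬ D v v

/-- `S` is an independent set of the digraph `D` (no arc of `D` joins two of its vertices). -/
def Indep {β : Type*} (D : β → β → Prop) (S : Set β) : Prop :=
  ∀ u ∈ S, ∀ v ∈ S, ¬ D u v

/-- `S` is independent by `H`-paths. -/
def HIndep {α β : Type*} (H : α → α → Prop) (D : β → β → Prop) (c : β → β → α)
    (S : Set β) : Prop :=
  ∀ u ∈ S, ∀ v ∈ S, u ≠ v → ¬ HPathReach H D c u v

/-- `S` is absorbent by `H`-paths. -/
def HAbsorbent {α β : Type*} (H : α → α → Prop) (D : β → β → Prop) (c : β → β → α)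
    (S : Set β) : Prop :=
  ∀ u ∉ S, ∃ v ∈ S, HPathReach H D c u v

/-- An `H`-kernel: independent and absorbent by `H`-paths. -/
def HKernel {α β : Type*} (H : α → α → Prop) (D : β → β → Prop) (c : β → β → α)
    (S : Set β) : Prop :=
  HIndep H D c S ∧ HAbsorbent H D c S

/-- `S` is independent by `H`-walks. -/
def WIndep {α β : Type*} (H : α → α → Prop) (D : β → β → Prop) (c : β → β → α)
    (S : Set β) : Prop :=
  ∀ u ∈ S, ∀ v ∈ S, u ≠ v → ¬ HWalkReach H D c u v

/-- `S` is absorbent by `H`-walks. -/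
def WAbsorbent {α β : Type*} (H : α → α → Prop) (D : β → β → Prop) (c : β → β → α)
    (S : Set β) : Prop :=
  ∀ u ∉ S, ∃ v ∈ S, HWalkReach H D c u v

/-- A kernel by `H`-walks. -/
def WKernel {α β : Type*} (H : α → α → Prop) (D : β → β → Prop) (c : β → β → α)
    (S : Set β) : Prop :=
  WIndep H D c S ∧ WAbsorbent H D c S

/-- The complement of a pattern: `(u,v)` (with `u ≠ v`) is an arc iff it is not an arc of `H`. -/
def complRel {α : Type*} (H : α → α → Prop) : α → α → Prop :=
  fun u v => u ≠ v ∧ ¬ H u v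

/-- `G` contains a directed cycle of odd length. -/
def HasOddDicycle {α : Type*} (G : α → α → Prop) : Prop :=
  ∃ (x : α) (l : List α), (x :: l).Nodup ∧ Odd (x :: l).length ∧ (x :: l).Chain' G ∧
    G ((x :: l).getLast (List.cons_ne_nil x l)) x

/-- The list of arcs (consecutive pairs) of a list of vertices. -/
def arcsOf {β : Type*} (l : List β) : List (β × β) := l.zip l.tail


/-- The three colours of the pattern `F₁`. -/
inductive F1V : Type
  | r | g | b
deriving DecidableEq

/-- The pattern `F₁` on `{r, g, b}`: all loops and all arcs except `(b, g)`. -/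
def F1 : F1V → F1V → Prop := fun a b => ¬ (a = F1V.b ∧ b = F1V.g)

/-- The vertex list of a list of arcs of a multidigraph. -/
def mVerts {β E : Type} (src tgt : E → β) : List E → List β
  | [] => []
  | e :: t => src e :: (e :: t).map tgt

/-- An `H`-path in an arc-coloured multidigraph given by source, target and colour maps:
a nonempty list of composable arcs visiting pairwise distinct vertices, whose colour
sequence is a directed walk in `H`. -/
def IsMPath {α β E : Type} (H : α → α → Prop) (src tgt : E → β) (col : E → α)
    (l : List E) : Prop :=
  l ≠ [] ∧ (mVerts src tgt l).Nodup ∧ l.Chain' (fun e f => tgt e = src f) ∧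
    (l.map col).Chain' H

/-- `u` reaches `v` by `H`-paths in the multidigraph. -/
def MReach {α β E : Type} (H : α → α → Prop) (src tgt : E → β) (col : E → α)
    (u v : β) : Prop :=
  ∃ l, IsMPath H src tgt col l ∧ l.head?.map src = some u ∧ l.getLast?.map tgt = some v

/-- An `H`-kernel of an arc-coloured multidigraph. -/
def MKernel {α β E : Type} (H : α → α → Prop) (src tgt : E → β) (col : E → α)
    (K : Set β) : Prop :=
  (∀ u ∈ K, ∀ v ∈ K, u ≠ v → ¬ MReach H src tgt col u v) ∧
    (∀ u ∉ K, ∃ v ∈ K, MReach H src tgt col u v)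

/-- There is an arc from `u` to `v` coloured `x` in the multidigraph. -/
def hasCol {β E : Type} (src tgt : E → β) (col : E → F1V) (x : F1V) (u v : β) : Prop :=
  ∃ e, src e = u ∧ tgt e = v ∧ col e = x

/-- The pair `(u,v)` carries a `g`-arc and a `b`-arc but no `r`-arc, so the construction
of `D̂` attaches the gadget with new vertices `z₁(u,v)`, `z₂(u,v)`. -/
def needZ {β E : Type} (src tgt : E → β) (col : E → F1V) (u v : β) : Prop :=
  ¬ hasCol src tgt col F1V.r u v ∧ hasCol src tgt col F1V.g u v ∧
    hasCol src tgt col F1V.b u v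

/-- The vertex set of `D̂`: the original vertices, the vertices `z₁(u,v)` (left copies of
pairs) and the vertices `z₂(u,v)` (right copies of pairs). -/
abbrev VHat (β : Type) : Type := β ⊕ ((β × β) ⊕ (β × β))

/-- The arcs of the simple digraph `D̂`: between original vertices, a single arc whenever
some arc was present; for each pair needing the gadget, the arcs `u → z₁`, `z₁ → z₂` and
`z₁ → v`. -/
def Dhat {β E : Type} (src tgt : E → β) (col : E → F1V) : VHat β → VHat β → Prop
  | .inl u, .inl v =>
      hasCol src tgt col F1V.r u v ∨ hasCol src tgt col F1V.g u v ∨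
        hasCol src tgt col F1V.b u v
  | .inl u, .inr (.inl p) => u = p.1 ∧ needZ src tgt col p.1 p.2
  | .inr (.inl p), .inr (.inr q) => p = q ∧ needZ src tgt col p.1 p.2
  | .inr (.inl p), .inl w => w = p.2 ∧ needZ src tgt col p.1 p.2
  | _, _ => False

open Classical in
/-- The colouring of `D̂`: `r` if an `r`-arc was present, else `g` if a `g`-arc was
present, else `b`; the gadget arcs `u → z₁`, `z₁ → z₂`, `z₁ → v` are coloured `b`, `g`,
`b` respectively. -/
noncomputable def chat {β E : Type} (src tgt : E → β) (col : E → F1V) :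
    VHat β → VHat β → F1V
  | .inl u, .inl v =>
      if hasCol src tgt col F1V.r u v then F1V.r
      else if hasCol src tgt col F1V.g u v then F1V.g
      else F1V.b
  | .inl _, .inr (.inl _) => F1V.b
  | .inr (.inl _), .inr (.inr _) => F1V.g
  | .inr (.inl _), .inl _ => F1V.b
  | _, _ => F1V.r

/-!
An `F₁`-walk is a walk whose colour sequence never has a `b`-arc followed by a `g`-arc. An arc
`e` of `D` is simulated in `D̂` either by the arc `(src e, tgt e)`, whose colour there is `r` or
`col e`, or, when `e` is a `b`-arc parallel to a `g`-arc but to no `r`-arc, by the detour through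
`z₁` coloured `b b`. Replacing a colour by `r`, or doubling a `b`, creates no forbidden pair, so
`F₁`-paths of `D` lift to `D̂`. Conversely `z₂` is a sink and `z₁(u, v)` lies only on the detour
from `u` to `v`, so a path of `D̂` between original vertices is the lift of a path of `D` whose
arcs all keep their colour.
-/

open List

theorem List.isChain_flatMap_replicate_iff {ι α : Type*} {R : α → α → Prop} (hR : ∀ a, R a a)
    (f : ι → α) {n : ι → ℕ} (hn : ∀ i, 0 < n i) :
    ∀ l : List ι, (l.flatMap fun i => replicate (n i) (f i)).IsChain R ↔ (l.map f).IsChain R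
  | [] => by simp
  | [i] => by simp [isChain_replicate_of_rel _ (hR _)]
  | i :: j :: t => by
    obtain ⟨k, hk⟩ : ∃ k, n j = k + 1 := Nat.exists_eq_succ_of_ne_zero (hn j).ne'
    have ih := isChain_flatMap_replicate_iff hR f hn (j :: t)
    rw [flatMap_cons, isChain_append, ih]
    simp [isChain_replicate_of_rel _ (hR _), getLast?_replicate, (hn i).ne', hk, replicate_succ,
      and_comm]

theorem F1_refl (c : F1V) : F1 c c := by cases c <;> simp [F1]

theorem F1_r_left (c : F1V) : F1 .r c := by simp [F1]

theorem F1_r_right (c : F1V) : F1 c .r := by simp [F1]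

section Dhat

variable {β E : Type} (src tgt : E → β) (col : E → F1V)

theorem Dhat_inl_of_edge (e : E) : Dhat src tgt col (.inl (src e)) (.inl (tgt e)) := by
  cases h : col e
  · exact Or.inl ⟨e, rfl, rfl, h⟩
  · exact Or.inr (Or.inl ⟨e, rfl, rfl, h⟩)
  · exact Or.inr (Or.inr ⟨e, rfl, rfl, h⟩)

theorem chat_inl_of_needZ {u v : β} (h : needZ src tgt col u v) :
    chat src tgt col (.inl u) (.inl v) = .g := by
  simp [chat, h.1, h.2.1]

theorem exists_edge_of_Dhat_inl {u v : β} (h : Dhat src tgt col (.inl u) (.inl v)) :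
    ∃ e, src e = u ∧ tgt e = v ∧ col e = chat src tgt col (.inl u) (.inl v) := by
  simp only [chat]
  split_ifs with hr hg
  · exact hr
  · exact hg
  · exact (h.resolve_left hr).resolve_left hg

/-- The arcs of `D` that `D̂` replaces by the detour `u → z₁ → v`. -/
def IsRerouted (e : E) : Prop := col e = .b ∧ needZ src tgt col (src e) (tgt e)

open Classical in
/-- The colour with which `e` is traversed in `D̂`; its detour `b b` counts once. -/
noncomputable def hatCol (e : E) : F1V :=
  if IsRerouted src tgt col e then .b else chat src tgt col (.inl (src e)) (.inl (tgt e))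

theorem hatCol_eq_r_or_eq_col (e : E) :
    hatCol src tgt col e = .r ∨ hatCol src tgt col e = col e := by
  have he : hasCol src tgt col (col e) (src e) (tgt e) := ⟨e, rfl, rfl, rfl⟩
  unfold hatCol IsRerouted needZ
  by_cases hr : hasCol src tgt col .r (src e) (tgt e) <;>
    by_cases hg : hasCol src tgt col .g (src e) (tgt e) <;>
    cases h : col e <;> simp_all [chat]

theorem isChain_map_hatCol {l : List E} (h : (l.map col).IsChain F1) :
    (l.map (hatCol src tgt col)).IsChain F1 := by
  rw [isChain_map] at h ⊢
  refine h.imp fun e f hef => ?_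
  rcases hatCol_eq_r_or_eq_col src tgt col e with he | he
  · rw [he]; exact F1_r_left _
  rcases hatCol_eq_r_or_eq_col src tgt col f with hf | hf
  · rw [hf]; exact F1_r_right _
  rwa [he, hf]

def IsWalkFrom : β → List E → Prop
  | _, [] => True
  | x, e :: t => src e = x ∧ IsWalkFrom (tgt e) t

theorem isWalkFrom_cons_iff {x : β} {e : E} {t : List E} :
    IsWalkFrom src tgt x (e :: t) ↔ src e = x ∧ (e :: t).IsChain (fun a b => tgt a = src b) := by
  induction t generalizing x e with
  | nil => simp [IsWalkFrom]
  | cons f t ih => rw [IsWalkFrom, ih, isChain_cons_cons, eq_comm (a := src f)]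

open Classical in
noncomputable def hatWalk : β → List E → List (VHat β)
  | x, [] => [.inl x]
  | x, e :: t => .inl x ::
      ((if IsRerouted src tgt col e then [.inr (.inl (x, tgt e))] else []) ++ hatWalk (tgt e) t)

theorem hatWalk_eq_cons (x : β) (l : List E) : ∃ T, hatWalk src tgt col x l = .inl x :: T := by
  cases l <;> exact ⟨_, rfl⟩

theorem getLast?_hatWalk_cons (x : β) (e : E) (t : List E) :
    (hatWalk src tgt col x (e :: t)).getLast? = ((e :: t).getLast?.map tgt).map .inl := by
  induction t generalizing x e with
  | nil => unfold hatWalk; split_ifs <;> simp [hatWalk]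
  | cons f t ih =>
    obtain ⟨T, hT⟩ := hatWalk_eq_cons src tgt col (tgt e) (f :: t)
    have hlast : ∀ (a : VHat β) (G : List (VHat β)),
        (a :: (G ++ hatWalk src tgt col (tgt e) (f :: t))).getLast? =
          (hatWalk src tgt col (tgt e) (f :: t)).getLast? := by
      intro a G; rw [hT, ← cons_append, getLast?_append_cons]
    rw [hatWalk, hlast, ih]
    simp

theorem isChain_hatWalk {x : β} {l : List E} (hw : IsWalkFrom src tgt x l) :
    (hatWalk src tgt col x l).IsChain (Dhat src tgt col) := by
  induction l generalizing x with
  | nil => exact isChain_singleton _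
  | cons e t ih =>
    obtain ⟨rfl, hw⟩ := hw
    obtain ⟨T, hT⟩ := hatWalk_eq_cons src tgt col (tgt e) t
    have hrest := ih hw
    rw [hT] at hrest
    unfold hatWalk
    split_ifs with hr
    · rw [singleton_append, hT]
      exact (hrest.cons_cons ⟨rfl, hr.2⟩).cons_cons ⟨rfl, hr.2⟩
    · rw [nil_append, hT]
      exact hrest.cons_cons (Dhat_inl_of_edge src tgt col e)

open Classical in
theorem colourList_hatWalk {x : β} {l : List E} (hw : IsWalkFrom src tgt x l) :
    colourList (chat src tgt col) (hatWalk src tgt col x l) =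
      l.flatMap fun e =>
        replicate (if IsRerouted src tgt col e then 2 else 1) (hatCol src tgt col e) := by
  induction l generalizing x with
  | nil => rfl
  | cons e t ih =>
    obtain ⟨rfl, hw⟩ := hw
    obtain ⟨T, hT⟩ := hatWalk_eq_cons src tgt col (tgt e) t
    have hrest := ih hw
    rw [hT] at hrest
    unfold hatWalk
    rw [flatMap_cons, ← hrest, hT]
    split_ifs with hr <;> simp [colourList, hatCol, hr, chat]

theorem isChain_colourList_hatWalk_iff {x : β} {l : List E} (hw : IsWalkFrom src tgt x l) :
    (colourList (chat src tgt col) (hatWalk src tgt col x l)).IsChain F1 ↔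
      (l.map (hatCol src tgt col)).IsChain F1 := by
  rw [colourList_hatWalk src tgt col hw]
  exact isChain_flatMap_replicate_iff F1_refl _ (fun _ => by split_ifs <;> norm_num) l

theorem map_inl_sublist_hatWalk (x : β) (l : List E) :
    (x :: l.map tgt).map .inl <+ hatWalk src tgt col x l := by
  induction l generalizing x with
  | nil => exact Sublist.refl _
  | cons e t ih =>
    exact ((ih (tgt e)).trans (sublist_append_right _ _)).cons_cons _

/-- Tags each `z₁(u, v)` on a lifted walk by its distinct vertex `u`, so distinct tags show that
the lift has no repeated vertex. -/
def stem : VHat β → β × Bool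
  | .inl u => (u, false)
  | .inr (.inl p) => (p.1, true)
  | .inr (.inr q) => (q.1, true)

theorem map_stem_hatWalk_sublist (x : β) (l : List E) :
    (hatWalk src tgt col x l).map stem <+ (x :: l.map tgt) ×ˢ [false, true] := by
  induction l generalizing x with
  | nil => simp [hatWalk, stem]
  | cons e t ih =>
    unfold hatWalk
    rw [map_cons, map_cons, product_cons, map_append]
    refine Sublist.cons₂ _ (Sublist.append ?_ (ih (tgt e)))
    split_ifs <;> simp [stem]

theorem nodup_hatWalk {x : β} {l : List E} (h : (x :: l.map tgt).Nodup) :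
    (hatWalk src tgt col x l).Nodup :=
  ((h.product (by simp)).sublist (map_stem_hatWalk_sublist src tgt col x l)).of_map stem

theorem nodup_of_nodup_hatWalk {x : β} {l : List E} (h : (hatWalk src tgt col x l).Nodup) :
    (x :: l.map tgt).Nodup :=
  (h.sublist (map_inl_sublist_hatWalk src tgt col x l)).of_map _

theorem exists_hatWalk_eq : ∀ (x : β) (T : List (VHat β)) (y : β),
    (.inl x :: T).IsChain (Dhat src tgt col) → (.inl x :: T).getLast? = some (.inl y) →
    ∃ l, IsWalkFrom src tgt x l ∧ hatWalk src tgt col x l = .inl x :: T ∧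
      ∀ e ∈ l, hatCol src tgt col e = col e
  | x, [], _, _, _ => ⟨[], trivial, rfl, by simp⟩
  | x, .inl v :: T, y, hD, hy => by
    rw [isChain_cons_cons] at hD
    obtain ⟨e, rfl, rfl, hc⟩ := exists_edge_of_Dhat_inl src tgt col hD.1
    have hr : ¬ IsRerouted src tgt col e := fun hr => by
      rw [chat_inl_of_needZ src tgt col hr.2, hr.1] at hc
      cases hc
    obtain ⟨l, hw, hl, hcol⟩ :=
      exists_hatWalk_eq (tgt e) T y hD.2 (by rwa [getLast?_cons_cons] at hy)
    refine ⟨e :: l, ⟨rfl, hw⟩, by simp [hatWalk, hr, hl], ?_⟩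
    simpa [hatCol, hr, hc] using hcol
  | x, .inr (.inl p) :: .inl v :: T, y, hD, hy => by
    rw [isChain_cons_cons, isChain_cons_cons] at hD
    obtain ⟨⟨rfl, hz⟩, ⟨rfl, -⟩, hD⟩ := hD
    obtain ⟨e, hs, ht, hb⟩ := hz.2.2
    have hr : IsRerouted src tgt col e := ⟨hb, hs ▸ ht ▸ hz⟩
    obtain ⟨l, hw, hl, hcol⟩ :=
      exists_hatWalk_eq p.2 T y hD (by rwa [getLast?_cons_cons, getLast?_cons_cons] at hy)
    refine ⟨e :: l, ⟨hs, ht ▸ hw⟩, by simp [hatWalk, hr, ht, hl], ?_⟩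
    simpa [hatCol, hr, hb] using hcol
  | x, .inr (.inl p) :: .inr (.inr q) :: T, y, hD, hy => by
    cases T with
    | nil => simp at hy
    | cons w T => cases (isChain_cons_cons.1 (isChain_cons_cons.1 hD).2).2.rel_head
  | _, [.inr (.inl _)], _, _, hy => by simp at hy
  | _, .inr (.inl _) :: .inr (.inl _) :: _, _, hD, _ => (isChain_cons_cons.1 hD).2.rel_head.elim
  | _, .inr (.inr _) :: _, _, hD, _ => (isChain_cons_cons.1 hD).1.elim

theorem hPathReach_inl_of_mReach {x y : β} (h : MReach F1 src tgt col x y) :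
    HPathReach F1 (Dhat src tgt col) (chat src tgt col) (.inl x) (.inl y) := by
  obtain ⟨_ | ⟨e, t⟩, ⟨hne, hnd, hch, hcol⟩, hx, hy⟩ := h
  · exact absurd rfl hne
  obtain rfl : src e = x := by simpa using hx
  have hw : IsWalkFrom src tgt (src e) (e :: t) := (isWalkFrom_cons_iff src tgt).2 ⟨rfl, hch⟩
  refine ⟨hatWalk src tgt col (src e) (e :: t), ⟨⟨?_, isChain_hatWalk src tgt col hw,
    (isChain_colourList_hatWalk_iff src tgt col hw).2 (isChain_map_hatCol src tgt col hcol)⟩,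
    nodup_hatWalk src tgt col hnd⟩, by unfold hatWalk; rfl, ?_⟩
  · exact le_trans (by simp) (map_inl_sublist_hatWalk src tgt col _ _).length_le
  · rw [getLast?_hatWalk_cons, hy]; rfl

theorem mReach_of_hPathReach_inl {x y : β}
    (h : HPathReach F1 (Dhat src tgt col) (chat src tgt col) (.inl x) (.inl y)) :
    MReach F1 src tgt col x y := by
  obtain ⟨L, ⟨⟨hlen, hD, hF⟩, hnd⟩, hx, hy⟩ := h
  obtain ⟨T, rfl⟩ := head?_eq_some_iff.1 hx
  obtain ⟨l, hw, hL, hcol⟩ := exists_hatWalk_eq src tgt col x T y hD hy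
  rw [← hL] at hlen hF hnd hy
  rcases l with _ | ⟨e, t⟩
  · simp [hatWalk] at hlen
  obtain ⟨rfl, hch⟩ := (isWalkFrom_cons_iff src tgt).1 hw
  refine ⟨e :: t, ⟨cons_ne_nil _ _, nodup_of_nodup_hatWalk src tgt col hnd, hch, ?_⟩, rfl, ?_⟩
  · rw [← map_congr_left hcol]
    exact (isChain_colourList_hatWalk_iff src tgt col hw).1 hF
  · simpa [getLast?_hatWalk_cons] using hy

end Dhat

theorem stmt15_general {β E : Type} (src tgt : E → β) (col : E → F1V) :
    ∀ x y : β, MReach F1 src tgt col x y ↔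
      HPathReach F1 (Dhat src tgt col) (chat src tgt col) (Sum.inl x) (Sum.inl y) :=
  fun _ _ => ⟨hPathReach_inl_of_mReach src tgt col, mReach_of_hPathReach_inl src tgt col⟩

/-- For any two original vertices `x, y` of the `F₁`-arc-coloured
multidigraph `D`, there is an `F₁`-path from `x` to `y` in `D` iff there is one from `x`
to `y` in the digraph `D̂`. -/
theorem stmt15 {β E : Type} (src tgt : E → β) (col : E → F1V)
    (hl : ∀ e, src e ≠ tgt e) :
    ∀ x y : β, MReach F1 src tgt col x y ↔
      HPathReach F1 (Dhat src tgt col) (chat src tgt col) (Sum.inl x) (Sum.inl y) :=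
  stmt15_general src tgt col
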